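/- An edge-colored connected graph G of order n has a heterochromatic spanning tree if and only if for every partition of V(G) into t parts (1 <= t <= n), there exist at least t-1 edges with pairwise distinct colors each joining vertices in different parts of the partition. -/

import Mathlib

/-!
Suzuki's criterion: `G` has a heterochromatic spanning tree iff for every set `R` of colours,
deleting the edges with colours in `R` leaves at most `|R| + 1` components. A heterochromatic tree
gives the partition condition, since cutting the tree edges that cross a partition leaves at least
as many components as there are parts; the partition condition gives the criterion, by taking the
partition of `G - E_R` into its components.

For sufficiency of the criterion, while two edges `e₁ ≠ e₂` share a colour, one of them can be
deleted without violating it. Otherwise there are witnesses `R₁`, `R₂`, and the supermodularity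
`ω(G - s) + ω(G - t) ≤ ω(G - (s ∪ t)) + ω(G - (s ∩ t))` of the number of components, applied to
`s = {e₁} ∪ E_{R₁}` and `t = {e₂} ∪ E_{R₂}`, contradicts `|R₁ ∪ R₂| + |R₁ ∩ R₂| = |R₁| + |R₂|`.
Once all colours are distinct, the criterion for `R = ∅` makes the graph connected.
-/

open SimpleGraph Finset

/-- Number of connected components of a graph. -/
noncomputable def omega {V : Type*} (G : SimpleGraph V) : ℕ :=
  Nat.card G.ConnectedComponent

/-- Number of edges of `G` having color `c`. -/
noncomputable def colorCount {V C : Type*} (G : SimpleGraph V)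
    (color : Sym2 V → C) (c : C) : ℕ :=
  Nat.card {e : Sym2 V // e ∈ G.edgeSet ∧ color e = c}

/-- `G` is `f`-chromatic: each color `c` appears on at most `f c` edges. -/
def IsChromatic {V C : Type*} (G : SimpleGraph V)
    (color : Sym2 V → C) (f : C → ℕ) : Prop :=
  ∀ c, colorCount G color c ≤ f c

/-- `G - E_R(G)` : delete all edges whose color lies in `R`. -/
def delR {V C : Type*} (G : SimpleGraph V) (color : Sym2 V → C)
    (R : Finset C) : SimpleGraph V :=
  G.deleteEdges {e | color e ∈ R}

lemma Finpartition.notMem_part_iff {α : Type*} [DecidableEq α] {s : Finset α} (P : Finpartition s)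
    {x y : α} : y ∉ P.part x ↔ ∀ p ∈ P.parts, ¬(x ∈ p ∧ y ∈ p) := by
  rw [Finpartition.mem_part_iff_exists]
  grind

namespace SimpleGraph

variable {V : Type*} {G K L : SimpleGraph V}

lemma deleteEdges_singleton_lt {e : Sym2 V} (he : e ∈ G.edgeSet) : G.deleteEdges {e} < G :=
  edgeSet_ssubset_edgeSet.mp (by rwa [edgeSet_deleteEdges, Set.sdiff_singleton_ssubset])

lemma omega_anti [Finite V] (h : K ≤ L) : omega L ≤ omega K :=
  ConnectedComponent.card_le_card_of_le h

lemma omega_deleteEdges_mono [Finite V] {s t : Set (Sym2 V)} (h : s ⊆ t) :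
    omega (G.deleteEdges s) ≤ omega (G.deleteEdges t) :=
  omega_anti (deleteEdges_anti h)

lemma Connected.omega_eq_one (h : G.Connected) : omega G = 1 := by
  have := h.nonempty
  have := h.preconnected.subsingleton_connectedComponent
  exact Nat.card_eq_one_iff_unique.mpr ⟨inferInstance, inferInstance⟩

lemma connected_of_omega_le_one [Finite V] [Nonempty V] (h : omega G ≤ 1) : G.Connected := by
  have : Subsingleton G.ConnectedComponent := Finite.card_le_one_iff_subsingleton.mp h
  exact (connected_iff G).mpr
    ⟨fun v w ↦ ConnectedComponent.exact (Subsingleton.elim _ _), inferInstance⟩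

lemma Reachable.deleteEdges_singleton_or {x y a b : V} (h : G.Reachable a b) :
    (G.deleteEdges {s(x, y)}).Reachable a b ∨
      (((G.deleteEdges {s(x, y)}).Reachable a x ∨ (G.deleteEdges {s(x, y)}).Reachable a y) ∧
        ((G.deleteEdges {s(x, y)}).Reachable b x ∨ (G.deleteEdges {s(x, y)}).Reachable b y)) := by
  set K := G.deleteEdges {s(x, y)}
  obtain ⟨w⟩ := h
  induction w with
  | nil => exact .inl .rfl
  | @cons u v b huv _ ih =>
    by_cases he : s(u, v) = s(x, y)
    · have hu : K.Reachable u x ∨ K.Reachable u y := by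
        rcases Sym2.eq_iff.mp he with ⟨rfl, -⟩ | ⟨rfl, -⟩ <;> simp
      have hv : K.Reachable v x ∨ K.Reachable v y := by
        rcases Sym2.eq_iff.mp he with ⟨-, rfl⟩ | ⟨-, rfl⟩ <;> simp
      refine .inr ⟨hu, ?_⟩
      rcases ih with hvb | ⟨-, hb⟩
      · exact hv.imp hvb.symm.trans hvb.symm.trans
      · exact hb
    · have hK : K.Reachable u v := (deleteEdges_adj.mpr ⟨huv, by simpa using he⟩).reachable
      exact ih.imp hK.trans (And.imp_left (Or.imp hK.trans hK.trans))

lemma omega_deleteEdges_singleton_of_not_isBridge [Finite V] {e : Sym2 V} (h : ¬ G.IsBridge e) :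
    omega (G.deleteEdges {e}) = omega G := by
  induction e with | h x y
  set K := G.deleteEdges {s(x, y)}
  have hxy : K.Reachable x y := not_not.mp h
  refine le_antisymm (Nat.card_le_card_of_injective (ConnectedComponent.map (.ofLE
    (deleteEdges_le _))) ?_) (omega_anti (deleteEdges_le _))
  refine ConnectedComponent.ind₂ fun a b hab ↦ ConnectedComponent.sound ?_
  rcases (ConnectedComponent.exact hab).deleteEdges_singleton_or (x := x) (y := y) with
    h | ⟨ha | ha, hb | hb⟩
  · exact h
  · exact ha.trans hb.symm
  · exact (ha.trans hxy).trans hb.symm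
  · exact (ha.trans hxy.symm).trans hb.symm
  · exact ha.trans hb.symm

lemma omega_deleteEdges_singleton_of_isBridge [Finite V] {e : Sym2 V} (he : e ∈ G.edgeSet)
    (h : G.IsBridge e) : omega (G.deleteEdges {e}) = omega G + 1 := by
  classical
  induction e with | h x y
  set K := G.deleteEdges {s(x, y)}
  have hxy : ¬ K.Reachable x y := h
  set cx := K.connectedComponentMk x
  -- Dropping the component of `x` makes the induced map bijective: the component of `y`
  -- still covers their common image.
  have hbij : Function.Bijective fun c : {c : K.ConnectedComponent // c ≠ cx} ↦
      c.1.map (.ofLE (deleteEdges_le _)) := by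
    constructor
    · rintro ⟨c, hc⟩ ⟨d, hd⟩ hcd
      induction c using ConnectedComponent.ind with | h a
      induction d using ConnectedComponent.ind with | h b
      have hax : ¬ K.Reachable a x := fun h ↦ hc (ConnectedComponent.sound h)
      have hbx : ¬ K.Reachable b x := fun h ↦ hd (ConnectedComponent.sound h)
      refine Subtype.ext (ConnectedComponent.sound ?_)
      rcases (ConnectedComponent.exact hcd).deleteEdges_singleton_or (x := x) (y := y) with
        h | ⟨ha | ha, hb | hb⟩
      · exact h
      · exact absurd ha hax
      · exact absurd ha hax
      · exact absurd hb hbx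
      · exact ha.trans hb.symm
    · refine ConnectedComponent.ind fun v ↦ ?_
      by_cases hvx : K.Reachable v x
      · refine ⟨⟨K.connectedComponentMk y, fun h ↦ hxy (ConnectedComponent.exact h).symm⟩, ?_⟩
        exact ConnectedComponent.sound
          ((G.mem_edgeSet.mp he).symm.reachable.trans (hvx.mono (deleteEdges_le _)).symm)
      · exact ⟨⟨K.connectedComponentMk v, fun h ↦ hvx (ConnectedComponent.exact h)⟩, rfl⟩
  calc omega K = Nat.card {c : K.ConnectedComponent // c ≠ cx} + 1 := by
        rw [← Finite.card_option, Nat.card_congr (Equiv.optionSubtypeNe cx), omega]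
    _ = omega G + 1 := by rw [Nat.card_eq_of_bijective _ hbij, omega]

lemma omega_deleteEdges_singleton_of_not_mem {e : Sym2 V} (he : e ∉ G.edgeSet) :
    omega (G.deleteEdges {e}) = omega G := by
  rw [deleteEdges_eq_self.mpr (Set.disjoint_singleton_right.mpr he)]

lemma omega_deleteEdges_singleton_le [Finite V] (e : Sym2 V) :
    omega (G.deleteEdges {e}) ≤ omega G + 1 := by
  by_cases he : e ∈ G.edgeSet
  · by_cases hb : G.IsBridge e
    · rw [omega_deleteEdges_singleton_of_isBridge he hb]
    · rw [omega_deleteEdges_singleton_of_not_isBridge hb]; omega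
  · rw [omega_deleteEdges_singleton_of_not_mem he]; omega

lemma omega_deleteEdges_singleton_add_le [Finite V] (hKL : K ≤ L) {e : Sym2 V}
    (he : e ∈ L.edgeSet → e ∈ K.edgeSet) :
    omega (L.deleteEdges {e}) + omega K ≤ omega L + omega (K.deleteEdges {e}) := by
  have hK := omega_anti (deleteEdges_le (G := K) {e})
  by_cases heL : e ∈ L.edgeSet
  · by_cases hb : L.IsBridge e
    · rw [omega_deleteEdges_singleton_of_isBridge heL hb,
        omega_deleteEdges_singleton_of_isBridge (he heL) (hb.anti hKL)]
      omega
    · rw [omega_deleteEdges_singleton_of_not_isBridge hb]; omega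
  · rw [omega_deleteEdges_singleton_of_not_mem heL]; omega

lemma omega_deleteEdges_le_add_card [Finite V] (D : Finset (Sym2 V)) :
    omega (G.deleteEdges D) ≤ omega G + D.card := by
  classical
  induction D using Finset.induction_on with
  | empty => simp
  | insert e D heD ih =>
    rw [coe_insert, Set.insert_eq, Set.union_comm, ← deleteEdges_deleteEdges,
      card_insert_of_notMem heD]
    have := omega_deleteEdges_singleton_le (G := G.deleteEdges D) e
    omega

lemma omega_deleteEdges_add_le_of_le [Finite V] (D : Finset (Sym2 V)) (hKL : K ≤ L)
    (hD : ∀ e ∈ D, e ∈ L.edgeSet → e ∈ K.edgeSet) :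
    omega (L.deleteEdges D) + omega K ≤ omega L + omega (K.deleteEdges D) := by
  classical
  induction D using Finset.induction_on with
  | empty => simp
  | insert e D heD ih =>
    simp only [coe_insert, Set.insert_eq, Set.union_comm _ (D : Set (Sym2 V)),
      ← deleteEdges_deleteEdges]
    have hstep := omega_deleteEdges_singleton_add_le (deleteEdges_mono (s := D) hKL) (e := e)
      (by
        simp only [edgeSet_deleteEdges, Set.mem_sdiff]
        exact fun h ↦ ⟨hD e (mem_insert_self e D) h.1, h.2⟩)
    have hrest := ih fun f hf ↦ hD f (mem_insert_of_mem hf)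
    omega

lemma omega_deleteEdges_add_le_union_inter [Finite V] (s t : Set (Sym2 V)) :
    omega (G.deleteEdges s) + omega (G.deleteEdges t) ≤
      omega (G.deleteEdges (s ∪ t)) + omega (G.deleteEdges (s ∩ t)) := by
  classical
  -- `G - t = (G - (s ∩ t)) - (t \ s)` and `G - (s ∪ t) = (G - s) - (t \ s)`.
  set D := (Set.toFinite (t \ s)).toFinset
  have hD : (D : Set (Sym2 V)) = t \ s := Set.Finite.coe_toFinset _
  have key := omega_deleteEdges_add_le_of_le D (deleteEdges_anti (G := G) (s₁ := s ∩ t)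
    Set.inter_subset_left) fun e he heL ↦ by
      rw [← mem_coe, hD] at he
      rw [edgeSet_deleteEdges] at heL ⊢
      exact ⟨heL.1, he.2⟩
  have hst : s ∩ t ∪ t \ s = t := by rw [Set.inter_comm, Set.inter_union_sdiff]
  rw [deleteEdges_deleteEdges, deleteEdges_deleteEdges, hD, Set.union_sdiff_self, hst] at key
  omega

section Partition

variable [Fintype V] [DecidableEq V] {P : Finpartition (univ : Finset V)}

lemma card_parts_le_omega (hP : ∀ v w, G.Adj v w → w ∈ P.part v) : #P.parts ≤ omega G := by
  have hreach {v w : V} (h : G.Reachable v w) : P.part v = P.part w := by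
    obtain ⟨p⟩ := h
    induction p with
    | nil => rfl
    | cons hadj _ ih =>
      exact ((P.mem_part_iff_part_eq_part (mem_univ _) (mem_univ _)).mp (hP _ _ hadj)).symm.trans ih
  let f : G.ConnectedComponent → P.parts :=
    ConnectedComponent.lift (fun v ↦ ⟨P.part v, P.part_mem.mpr (mem_univ v)⟩)
      fun v w p _ ↦ Subtype.ext (hreach p.reachable)
  have hf : Function.Surjective f := by
    rintro ⟨p, hp⟩
    obtain ⟨v, hv⟩ := P.nonempty_of_mem_parts hp
    exact ⟨G.connectedComponentMk v, Subtype.ext (P.part_eq_of_mem hp hv)⟩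
  simpa [omega] using Nat.card_le_card_of_surjective f hf

lemma omega_le_card_parts (hP : ∀ v w, w ∈ P.part v → G.Reachable v w) : omega G ≤ #P.parts := by
  let f : P.parts → G.ConnectedComponent :=
    fun p ↦ G.connectedComponentMk (P.nonempty_of_mem_parts p.2).choose
  have hf : Function.Surjective f := by
    refine ConnectedComponent.ind fun v ↦ ?_
    have hv : P.part v ∈ P.parts := P.part_mem.mpr (mem_univ v)
    exact ⟨⟨_, hv⟩, ConnectedComponent.sound (hP _ _ (P.nonempty_of_mem_parts hv).choose_spec).symm⟩
  simpa [omega] using Nat.card_le_card_of_surjective f hf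

end Partition

section Color

variable {C : Type*} {color : Sym2 V → C}

def SuzukiCondition (G : SimpleGraph V) (color : Sym2 V → C) : Prop :=
  ∀ R : Finset C, omega (delR G color R) ≤ #R + 1

lemma delR_deleteEdges_singleton {R : Finset C} {e : Sym2 V} (he : color e ∈ R) :
    delR (G.deleteEdges {e}) color R = delR G color R := by
  rw [delR, delR, deleteEdges_deleteEdges, Set.singleton_union,
    Set.insert_eq_of_mem (show e ∈ {e | color e ∈ R} from he)]

lemma SuzukiCondition.deleteEdges_or [Finite V] (hG : G.SuzukiCondition color) {e₁ e₂ : Sym2 V}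
    (hne : e₁ ≠ e₂) (hcol : color e₁ = color e₂) :
    (G.deleteEdges {e₁}).SuzukiCondition color ∨ (G.deleteEdges {e₂}).SuzukiCondition color := by
  classical
  by_contra! h
  simp only [SuzukiCondition, not_forall, not_le] at h
  obtain ⟨⟨R₁, h₁⟩, ⟨R₂, h₂⟩⟩ := h
  have hc₁ : color e₁ ∉ R₁ := fun hc ↦ by
    have := hG R₁; rw [delR_deleteEdges_singleton hc] at h₁; omega
  have hc₂ : color e₂ ∉ R₂ := fun hc ↦ by
    have := hG R₂; rw [delR_deleteEdges_singleton hc] at h₂; omega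
  rw [delR, deleteEdges_deleteEdges] at h₁ h₂
  set s : Set (Sym2 V) := {e₁} ∪ {e | color e ∈ R₁}
  set t : Set (Sym2 V) := {e₂} ∪ {e | color e ∈ R₂}
  have hunion : omega (G.deleteEdges (s ∪ t)) ≤ #(R₁ ∪ R₂) + 2 := by
    have hsub : s ∪ t ⊆ {e | color e ∈ insert (color e₁) (R₁ ∪ R₂)} := by
      rintro e ((rfl | h) | (rfl | h))
      · exact mem_insert_self _ _
      · exact mem_insert_of_mem (mem_union_left _ h)
      · exact hcol ▸ mem_insert_self _ _
      · exact mem_insert_of_mem (mem_union_right _ h)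
    calc omega (G.deleteEdges (s ∪ t))
        ≤ omega (delR G color (insert (color e₁) (R₁ ∪ R₂))) := omega_deleteEdges_mono hsub
      _ ≤ #(insert (color e₁) (R₁ ∪ R₂)) + 1 := hG _
      _ ≤ #(R₁ ∪ R₂) + 2 := by have := card_insert_le (color e₁) (R₁ ∪ R₂); omega
  have hinter : omega (G.deleteEdges (s ∩ t)) ≤ #(R₁ ∩ R₂) + 1 := by
    have hsub : s ∩ t ⊆ {e | color e ∈ R₁ ∩ R₂} := by
      rintro e ⟨rfl | h₁, rfl | h₂⟩
      · exact absurd rfl hne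
      · exact absurd (hcol ▸ h₂) hc₂
      · exact absurd (hcol ▸ h₁) hc₁
      · exact mem_inter.mpr ⟨h₁, h₂⟩
    exact (omega_deleteEdges_mono hsub).trans (hG _)
  have := omega_deleteEdges_add_le_union_inter (G := G) s t
  have := card_union_add_card_inter R₁ R₂
  omega

lemma SuzukiCondition.exists_isTree_le [Finite V] [Nonempty V] (hG : G.SuzukiCondition color) :
    ∃ T ≤ G, T.IsTree ∧ Set.InjOn color T.edgeSet := by
  induction G using WellFoundedLT.induction with | ind G ih
  by_cases hinj : Set.InjOn color G.edgeSet
  · have hconn : G.Connected := connected_of_omega_le_one (by simpa [delR] using hG ∅)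
    obtain ⟨T, hTG, hT⟩ := hconn.exists_isTree_le
    exact ⟨T, hTG, hT, hinj.mono (edgeSet_mono hTG)⟩
  · obtain ⟨e₁, he₁, e₂, he₂, hcol, hne⟩ : ∃ e₁ ∈ G.edgeSet, ∃ e₂ ∈ G.edgeSet,
        color e₁ = color e₂ ∧ e₁ ≠ e₂ := by simpa [Set.InjOn] using hinj
    have shrink {e : Sym2 V} (he : e ∈ G.edgeSet) (hC : (G.deleteEdges {e}).SuzukiCondition color) :
        ∃ T ≤ G, T.IsTree ∧ Set.InjOn color T.edgeSet := by
      obtain ⟨T, hT, hTree, hTinj⟩ := ih _ (deleteEdges_singleton_lt he) hC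
      exact ⟨T, hT.trans (deleteEdges_le _), hTree, hTinj⟩
    exact (hG.deleteEdges_or hne hcol).elim (shrink he₁) (shrink he₂)

variable [Fintype V] [DecidableEq V]

lemma exists_crossing_injOn_of_isTree {F : SimpleGraph V} (hFG : F ≤ G) (hF : F.IsTree)
    (hinj : Set.InjOn color F.edgeSet) (P : Finpartition (univ : Finset V)) :
    ∃ S : Finset (Sym2 V), #P.parts - 1 ≤ #S ∧ ↑S ⊆ G.edgeSet ∧ Set.InjOn color ↑S ∧
      ∀ e ∈ S, ∃ x y : V, e = s(x, y) ∧ ∀ p ∈ P.parts, ¬(x ∈ p ∧ y ∈ p) := by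
  classical
  set S := F.edgeFinset.filter fun e ↦ ∃ x y : V, e = s(x, y) ∧ ∀ p ∈ P.parts, ¬(x ∈ p ∧ y ∈ p)
  have hSF : ↑S ⊆ F.edgeSet := fun e he ↦ mem_edgeFinset.mp (mem_filter.mp he).1
  refine ⟨S, ?_, hSF.trans (edgeSet_mono hFG), hinj.mono hSF, fun e he ↦ (mem_filter.mp he).2⟩
  have hparts : #P.parts ≤ omega (F.deleteEdges S) := card_parts_le_omega fun v w hvw ↦ by
    obtain ⟨hadj, hnS⟩ := deleteEdges_adj.mp hvw
    by_contra hw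
    exact hnS (mem_filter.mpr ⟨mem_edgeFinset.mpr hadj, v, w, rfl, P.notMem_part_iff.mp hw⟩)
  have := omega_deleteEdges_le_add_card (G := F) S
  have := hF.connected.omega_eq_one
  omega

lemma suzukiCondition_of_forall_finpartition
    (h : ∀ P : Finpartition (univ : Finset V), ∃ S : Finset (Sym2 V), #P.parts - 1 ≤ #S ∧
      ↑S ⊆ G.edgeSet ∧ Set.InjOn color ↑S ∧
      ∀ e ∈ S, ∃ x y : V, e = s(x, y) ∧ ∀ p ∈ P.parts, ¬(x ∈ p ∧ y ∈ p)) :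
    G.SuzukiCondition color := by
  classical
  intro R
  set H := delR G color R
  let P := Finpartition.ofSetoid H.reachableSetoid
  have hP : omega H ≤ #P.parts :=
    omega_le_card_parts fun _ _ hw ↦ Finpartition.mem_part_ofSetoid_iff_rel.mp hw
  obtain ⟨S, hcard, hSG, hSinj, hcross⟩ := h P
  have hSR : ∀ e ∈ S, color e ∈ R := by
    intro e he
    obtain ⟨x, y, rfl, hxy⟩ := hcross e he
    by_contra hc
    have hH : H.Adj x y := deleteEdges_adj.mpr ⟨hSG he, hc⟩
    exact P.notMem_part_iff.mpr hxy (Finpartition.mem_part_ofSetoid_iff_rel.mpr hH.reachable)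
  have : #S ≤ #R := by
    rw [← card_image_of_injOn hSinj]
    exact card_le_card (image_subset_iff.mpr hSR)
  omega

end Color

end SimpleGraph

theorem stmt12 {V C : Type*} [Fintype V] [DecidableEq V] (G : SimpleGraph V)
    (color : Sym2 V → C) (hG : G.Connected) :
    (∃ F : SimpleGraph V, F ≤ G ∧ F.IsTree ∧ Set.InjOn color F.edgeSet) ↔
      ∀ P : Finpartition (Finset.univ : Finset V),
        ∃ S : Finset (Sym2 V), P.parts.card - 1 ≤ S.card ∧
          ↑S ⊆ G.edgeSet ∧ Set.InjOn color ↑S ∧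
          ∀ e ∈ S, ∃ x y : V, e = s(x, y) ∧
            ∀ p ∈ P.parts, ¬(x ∈ p ∧ y ∈ p) := by
  refine ⟨fun ⟨F, hFG, hF, hinj⟩ ↦ exists_crossing_injOn_of_isTree hFG hF hinj, fun h ↦ ?_⟩
  have := hG.nonempty
  exact (suzukiCondition_of_forall_finpartition h).exists_isTree_le
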